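/- arXiv:0710.0697 — 4 statements merged into one kernel-verified Lean document; each statement's English description precedes it below -/
import Mathlib

section
/- Let β : ℕ → ℚ and q : ℕ → ℕ satisfy the jumping-value recursion with β_0 = 1 and Q_i = q_1⋯q_i. If c_0, …, c_k are integers with −q_j < c_j < q_j for all 1 ≤ j ≤ k (c_0 an arbitrary integer) and Σ_{j=0}^k c_j β_j = 0, then c_j = 0 for all 0 ≤ j ≤ k. Equivalently: for each γ in the semigroup generated by β_0,…,β_k there is at most one tuple (d_0,…,d_k) of nonnegative integers with d_j < q_j for all 1 ≤ j ≤ k and Σ d_j β_j = γ. -/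
/-- Integer numerators: `gseq p q i = Q_i * β_i` where `Q_i = q_1 ⋯ q_i`. -/
private def gseq (p q : ℕ → ℕ) : ℕ → ℤ
  | 0 => 1
  | 1 => (p 1 : ℤ)
  | (i+2) => (q (i+2) : ℤ) * (q (i+1) : ℤ) * gseq p q (i+1) + (p (i+2) : ℤ)

private lemma gseq_spec (β : ℕ → ℚ) (p q : ℕ → ℕ)
    (hqpos : ∀ i, 0 < q i)
    (hβ0 : β 0 = 1)
    (hβ1 : β 1 = (p 1 : ℚ) / (q 1 : ℚ))
    (hrec : ∀ i, 1 ≤ i →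
      β (i + 1) = (q i : ℚ) * β i
        + (1 / (∏ j ∈ Finset.Icc 1 i, (q j : ℚ))) * ((p (i + 1) : ℚ) / (q (i + 1) : ℚ))) :
    ∀ i, (∏ j ∈ Finset.Icc 1 i, (q j : ℚ)) * β i = (gseq p q i : ℚ) := by
  have hqne : ∀ i, (q i : ℚ) ≠ 0 := fun i => Nat.cast_ne_zero.mpr (hqpos i).ne'
  have hN : ∀ i, (∏ j ∈ Finset.Icc 1 i, (q j : ℚ)) ≠ 0 := fun i =>
    Finset.prod_ne_zero_iff.mpr fun j _ => hqne j
  intro i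
  induction i with
  | zero => simp [gseq, hβ0]
  | succ n ih =>
    match n, ih with
    | 0, _ =>
      simp only [gseq, hβ1, Finset.Icc_self, Finset.prod_singleton]
      push_cast
      rw [mul_div_cancel₀ _ (hqne 1)]
    | (m+1), ih =>
      have hrec' := hrec (m+1) (by omega)
      have hprod : (∏ j ∈ Finset.Icc 1 (m+2), (q j : ℚ))
          = (∏ j ∈ Finset.Icc 1 (m+1), (q j : ℚ)) * (q (m+2) : ℚ) := by
        rw [Finset.prod_Icc_succ_top (by omega)]
      have hgu : (gseq p q (m+1+1) : ℚ)
          = (q (m+2) : ℚ) * (q (m+1) : ℚ) * (gseq p q (m+1) : ℚ) + (p (m+2) : ℚ) := by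
        rw [show gseq p q (m+1+1)
          = (q (m+2) : ℤ) * (q (m+1) : ℤ) * gseq p q (m+1) + (p (m+2) : ℤ) from rfl]
        push_cast
        ring
      have hNne := hN (m+1)
      have e : (1 / ∏ j ∈ Finset.Icc 1 (m+1), (q j : ℚ)) * ((p (m+1+1) : ℚ) / (q (m+1+1) : ℚ))
          = (p (m+1+1) : ℚ) / ((∏ j ∈ Finset.Icc 1 (m+1), (q j : ℚ)) * (q (m+1+1) : ℚ)) := by
        rw [div_mul_div_comm, one_mul]
      rw [hprod, hrec', hgu, e, mul_add,
        mul_div_cancel₀ _ (mul_ne_zero hNne (hqne (m+2))), ← ih]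
      ring

private lemma gseq_coprime (p q : ℕ → ℕ)
    (hcop : ∀ i, 1 ≤ i → Nat.Coprime (p i) (q i)) :
    ∀ i, 1 ≤ i → IsCoprime (gseq p q i) (q i : ℤ) := by
  intro i hi
  match i, hi with
  | 1, _ =>
    show IsCoprime ((p 1 : ℤ)) (q 1 : ℤ)
    exact Nat.isCoprime_iff_coprime.mpr (hcop 1 le_rfl)
  | (m+2), _ =>
    have h : IsCoprime ((p (m+2) : ℤ)) ((q (m+2) : ℤ)) :=
      Nat.isCoprime_iff_coprime.mpr (hcop (m+2) (by omega))
    have := h.add_mul_left_left ((q (m+1) : ℤ) * gseq p q (m+1))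
    show IsCoprime ((q (m+2) : ℤ) * (q (m+1) : ℤ) * gseq p q (m+1) + (p (m+2) : ℤ)) (q (m+2) : ℤ)
    convert this using 1 <;> first | rfl | ring

/-- Uniqueness of bounded representations: if `Σ c_j β_j = 0` with `|c_j| < q_j`
for `1 ≤ j ≤ k` (no constraint on `c_0`), then all `c_j = 0`. -/
theorem stmt_2 (β : ℕ → ℚ) (p q : ℕ → ℕ)
    (hqpos : ∀ i, 0 < q i) (hppos : ∀ i, 0 < p i)
    (hβ0 : β 0 = 1)
    (hβ1 : β 1 = (p 1 : ℚ) / (q 1 : ℚ))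
    (hcop : ∀ i, 1 ≤ i → Nat.Coprime (p i) (q i))
    (hrec : ∀ i, 1 ≤ i →
      β (i + 1) = (q i : ℚ) * β i
        + (1 / (∏ j ∈ Finset.Icc 1 i, (q j : ℚ))) * ((p (i + 1) : ℚ) / (q (i + 1) : ℚ)))
    (k : ℕ) (c : ℕ → ℤ)
    (hc : ∀ j, 1 ≤ j → j ≤ k → -(q j : ℤ) < c j ∧ c j < (q j : ℤ))
    (hsum : ∑ j ∈ Finset.range (k + 1), (c j : ℚ) * β j = 0) :
    ∀ j, j ≤ k → c j = 0 := by
  have hqne : ∀ i, (q i : ℚ) ≠ 0 := fun i => Nat.cast_ne_zero.mpr (hqpos i).ne'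
  have hN : ∀ i, (∏ j ∈ Finset.Icc 1 i, (q j : ℚ)) ≠ 0 := fun i =>
    Finset.prod_ne_zero_iff.mpr fun j _ => hqne j
  have hg := gseq_spec β p q hqpos hβ0 hβ1 hrec
  have hgc := gseq_coprime p q hcop
  induction k generalizing c with
  | zero =>
    intro j hj
    interval_cases j
    have h0 : (c 0 : ℚ) = 0 := by simpa [hβ0] using hsum
    exact_mod_cast h0
  | succ k ih =>
    -- integer form of the sum
    have hint : ∑ j ∈ Finset.range (k + 2),
        c j * (∏ i ∈ Finset.Icc (j+1) (k+1), (q i : ℤ)) * gseq p q j = 0 := by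
      have hcast : ((∑ j ∈ Finset.range (k + 2),
          c j * (∏ i ∈ Finset.Icc (j+1) (k+1), (q i : ℤ)) * gseq p q j : ℤ) : ℚ)
          = (∏ j ∈ Finset.Icc 1 (k+1), (q j : ℚ))
            * ∑ j ∈ Finset.range (k + 2), (c j : ℚ) * β j := by
        push_cast
        rw [Finset.mul_sum]
        refine Finset.sum_congr rfl ?_
        intro j hj
        have hjk : j ≤ k + 1 := by
          have := Finset.mem_range.mp hj; omega
        have hsplit : (∏ i ∈ Finset.Icc 1 j, (q i : ℚ))
            * (∏ i ∈ Finset.Icc (j+1) (k+1), (q i : ℚ))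
            = ∏ i ∈ Finset.Icc 1 (k+1), (q i : ℚ) := by
          rw [show Finset.Icc (j+1) (k+1) = Finset.Ioc j (k+1) from Finset.Icc_add_one_left_eq_Ioc j (k+1),
            show Finset.Icc 1 j = Finset.Ioc 0 j from Finset.Icc_add_one_left_eq_Ioc 0 j,
            show Finset.Icc 1 (k+1) = Finset.Ioc 0 (k+1) from Finset.Icc_add_one_left_eq_Ioc 0 (k+1)]
          exact Finset.prod_Ioc_consecutive _ (Nat.zero_le j) hjk
        calc (c j : ℚ) * (∏ i ∈ Finset.Icc (j+1) (k+1), (q i : ℚ)) * (gseq p q j : ℚ)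
            = (c j : ℚ) * (∏ i ∈ Finset.Icc (j+1) (k+1), (q i : ℚ))
              * ((∏ i ∈ Finset.Icc 1 j, (q i : ℚ)) * β j) := by rw [hg j]
          _ = ((∏ i ∈ Finset.Icc 1 j, (q i : ℚ))
              * (∏ i ∈ Finset.Icc (j+1) (k+1), (q i : ℚ))) * ((c j : ℚ) * β j) := by ring
          _ = (∏ i ∈ Finset.Icc 1 (k+1), (q i : ℚ)) * ((c j : ℚ) * β j) := by rw [hsplit]
      have : ((∑ j ∈ Finset.range (k + 2),
          c j * (∏ i ∈ Finset.Icc (j+1) (k+1), (q i : ℤ)) * gseq p q j : ℤ) : ℚ) = 0 := by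
        rw [hcast, hsum, mul_zero]
      exact_mod_cast this
    -- extract the top term
    rw [Finset.sum_range_succ] at hint
    have htop : c (k+1) * (∏ i ∈ Finset.Icc (k+2) (k+1), (q i : ℤ)) * gseq p q (k+1)
        = c (k+1) * gseq p q (k+1) := by
      rw [Finset.Icc_eq_empty (by omega), Finset.prod_empty, mul_one]
    rw [htop] at hint
    have hdvd : (q (k+1) : ℤ) ∣ c (k+1) * gseq p q (k+1) := by
      have hdvdsum : (q (k+1) : ℤ) ∣ ∑ j ∈ Finset.range (k + 1),
          c j * (∏ i ∈ Finset.Icc (j+1) (k+1), (q i : ℤ)) * gseq p q j := by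
        refine Finset.dvd_sum ?_
        intro j hj
        have hjk : j < k + 1 := Finset.mem_range.mp hj
        have hmem : k + 1 ∈ Finset.Icc (j+1) (k+1) := Finset.mem_Icc.mpr ⟨hjk, le_rfl⟩
        exact Dvd.dvd.mul_right (Dvd.dvd.mul_left
          (Finset.dvd_prod_of_mem _ hmem) _) _
      have : c (k+1) * gseq p q (k+1) = -(∑ j ∈ Finset.range (k + 1),
          c j * (∏ i ∈ Finset.Icc (j+1) (k+1), (q i : ℤ)) * gseq p q j) := by linarith
      rw [this]
      exact hdvdsum.neg_right
    have hdvdc : (q (k+1) : ℤ) ∣ c (k+1) :=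
      ((hgc (k+1) (by omega)).symm).dvd_of_dvd_mul_right hdvd
    have hck : c (k+1) = 0 := by
      have hb := hc (k+1) (by omega) le_rfl
      exact Int.eq_zero_of_abs_lt_dvd hdvdc (abs_lt.mpr ⟨hb.1, hb.2⟩)
    -- apply induction hypothesis
    have hsum' : ∑ j ∈ Finset.range (k + 1), (c j : ℚ) * β j = 0 := by
      rw [Finset.sum_range_succ, hck] at hsum
      simpa using hsum
    have hc' : ∀ j, 1 ≤ j → j ≤ k → -(q j : ℤ) < c j ∧ c j < (q j : ℤ) :=
      fun j h1 h2 => hc j h1 (by omega)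
    intro j hj
    rcases Nat.lt_or_ge j (k+1) with h | h
    · exact ih c hc' hsum' j (by omega)
    · have : j = k + 1 := by omega
      rw [this]; exact hck
end

section
/- With notation as in the independent jumping-value recursion — β̄_1 = p̄_1/q̄_1 and β̄_{l+1} = q̄_l β̄_l + (1/Q̄_l)·(p̄_{l+1}/q̄_{l+1}), where q̄_l ≥ 2 are integers, p̄_l positive integers coprime to q̄_l, and Q̄_l = q̄_1⋯q̄_l — the subgroup of ℚ generated by β̄_0 = 1, β̄_1, …, β̄_k equals (1/Q̄_k)·ℤ for every k ≥ 0. -/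
/-!
Induction on `k`. Going from `k` to `k + 1` adds the generator `β̄_{k+1}`, which by the recursion
is `p̄_{k+1}/Q̄_{k+1}` plus an element of the group generated so far (`0` for `k = 0`, `q̄_k β̄_k`
otherwise). So if that group is `(1/Q̄_k)ℤ = q̄_{k+1}·(1/Q̄_{k+1})ℤ`, the next one is generated by
`q̄_{k+1}/Q̄_{k+1}` and `p̄_{k+1}/Q̄_{k+1}`, which is `(1/Q̄_{k+1})ℤ` because `p̄_{k+1}` and
`q̄_{k+1}` are coprime.
-/

open AddSubgroup Finset

namespace AddSubgroup

variable {G : Type*} [AddGroup G]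

theorem zmultiples_nsmul_sup_zmultiples_nsmul {p q : ℕ} (h : p.Coprime q) (x : G) :
    zmultiples (p • x) ⊔ zmultiples (q • x) = zmultiples x := by
  refine le_antisymm (sup_le ?_ ?_) (zmultiples_le_of_mem ?_)
  · exact zmultiples_le_of_mem (nsmul_mem (mem_zmultiples x) p)
  · exact zmultiples_le_of_mem (nsmul_mem (mem_zmultiples x) q)
  · have hbezout : (p : ℤ) * p.gcdA q + q * p.gcdB q = 1 := by
      rw [← Nat.gcd_eq_gcd_ab, h, Nat.cast_one]
    have hx : x = p.gcdA q • (p • x) + p.gcdB q • (q • x) := by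
      rw [← natCast_zsmul, ← natCast_zsmul, ← mul_zsmul, ← mul_zsmul, ← add_zsmul, mul_comm,
        mul_comm (p.gcdB q), hbezout, one_zsmul]
    have hmem :
        p.gcdA q • (p • x) + p.gcdB q • (q • x) ∈ zmultiples (p • x) ⊔ zmultiples (q • x) :=
      add_mem (mem_sup_left (zsmul_mem (mem_zmultiples _) _))
        (mem_sup_right (zsmul_mem (mem_zmultiples _) _))
    rwa [← hx] at hmem

theorem sup_zmultiples_add_of_mem {H : AddSubgroup G} {y : G} (hy : y ∈ H) (z : G) :
    H ⊔ zmultiples (y + z) = H ⊔ zmultiples z := by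
  refine le_antisymm (sup_le le_sup_left (zmultiples_le_of_mem ?_))
    (sup_le le_sup_left (zmultiples_le_of_mem ?_))
  · exact add_mem (mem_sup_left hy) (mem_sup_right (mem_zmultiples z))
  · have hmem : -y + (y + z) ∈ H ⊔ zmultiples (y + z) :=
      add_mem (mem_sup_left (neg_mem hy)) (mem_sup_right (mem_zmultiples _))
    rwa [neg_add_cancel_left] at hmem

theorem closure_image_Iic_add_one (f : ℕ → G) (k : ℕ) :
    closure (f '' Set.Iic (k + 1)) = closure (f '' Set.Iic k) ⊔ zmultiples (f (k + 1)) := by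
  rw [← Order.succ_eq_add_one, Order.Iic_succ, Set.image_insert_eq, Set.insert_eq, closure_union,
    ← zmultiples_eq_closure, sup_comm]

end AddSubgroup

section JumpingValues

variable {βb : ℕ → ℚ} {pb qb : ℕ → ℕ}

theorem jumpingValue_sub_mem_closure (hβ1 : βb 1 = (pb 1 : ℚ) / (qb 1 : ℚ))
    (hrec : ∀ l, 1 ≤ l →
      βb (l + 1) = (qb l : ℚ) * βb l
        + (1 / (∏ j ∈ Icc 1 l, (qb j : ℚ))) * ((pb (l + 1) : ℚ) / (qb (l + 1) : ℚ)))
    (k : ℕ) :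
    βb (k + 1) - pb (k + 1) / ∏ j ∈ Icc 1 (k + 1), (qb j : ℚ) ∈
      AddSubgroup.closure (βb '' Set.Iic k) := by
  rcases Nat.eq_zero_or_pos k with rfl | hk
  · simp [hβ1]
  · have hdiff : βb (k + 1) - pb (k + 1) / ∏ j ∈ Icc 1 (k + 1), (qb j : ℚ) = qb k • βb k := by
      rw [hrec k hk, prod_Icc_succ_top (Nat.le_add_left 1 k), nsmul_eq_mul, div_mul_div_comm,
        one_mul]
      ring
    rw [hdiff]
    exact nsmul_mem (AddSubgroup.subset_closure (Set.mem_image_of_mem βb Set.self_mem_Iic)) _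

theorem closure_jumpingValues_eq_zmultiples (hq : ∀ l, 1 ≤ l → qb l ≠ 0)
    (hcop : ∀ l, 1 ≤ l → Nat.Coprime (pb l) (qb l)) (hβ0 : βb 0 = 1)
    (hβ1 : βb 1 = (pb 1 : ℚ) / (qb 1 : ℚ))
    (hrec : ∀ l, 1 ≤ l →
      βb (l + 1) = (qb l : ℚ) * βb l
        + (1 / (∏ j ∈ Icc 1 l, (qb j : ℚ))) * ((pb (l + 1) : ℚ) / (qb (l + 1) : ℚ)))
    (k : ℕ) :
    AddSubgroup.closure (βb '' Set.Iic k) = zmultiples (1 / ∏ j ∈ Icc 1 k, (qb j : ℚ)) := by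
  induction k with
  | zero =>
    have hIic : Set.Iic 0 = {0} := Set.ext fun _ => Nat.le_zero
    simp [hIic, hβ0, zmultiples_eq_closure]
  | succ k ih =>
    have hqk : (qb (k + 1) : ℚ) ≠ 0 := Nat.cast_ne_zero.mpr (hq _ k.succ_pos)
    have hprev : 1 / ∏ j ∈ Icc 1 k, (qb j : ℚ) =
        qb (k + 1) • (1 / ∏ j ∈ Icc 1 (k + 1), (qb j : ℚ)) := by
      rw [nsmul_eq_mul, prod_Icc_succ_top (Nat.le_add_left 1 k)]
      field_simp
    have hnew : (pb (k + 1) : ℚ) / ∏ j ∈ Icc 1 (k + 1), (qb j : ℚ) =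
        pb (k + 1) • (1 / ∏ j ∈ Icc 1 (k + 1), (qb j : ℚ)) := by
      rw [nsmul_eq_mul, mul_one_div]
    have hsplit := jumpingValue_sub_mem_closure hβ1 hrec k
    rw [closure_image_Iic_add_one, ← sub_add_cancel (βb (k + 1)) (_ / _),
      sup_zmultiples_add_of_mem hsplit, ih, hprev, hnew, sup_comm,
      zmultiples_nsmul_sup_zmultiples_nsmul (hcop _ k.succ_pos)]

end JumpingValues

theorem stmt_5_general (βb : ℕ → ℚ) (pb qb : ℕ → ℕ)
    (hq2 : ∀ l, 1 ≤ l → 2 ≤ qb l)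
    (hcop : ∀ l, 1 ≤ l → Nat.Coprime (pb l) (qb l))
    (hβ0 : βb 0 = 1)
    (hβ1 : βb 1 = (pb 1 : ℚ) / (qb 1 : ℚ))
    (hrec : ∀ l, 1 ≤ l →
      βb (l + 1) = (qb l : ℚ) * βb l
        + (1 / (∏ j ∈ Finset.Icc 1 l, (qb j : ℚ))) * ((pb (l + 1) : ℚ) / (qb (l + 1) : ℚ))) :
    ∀ k : ℕ, ∀ x : ℚ,
      x ∈ AddSubgroup.closure (βb '' Set.Iic k) ↔
        ∃ n : ℤ, x = (n : ℚ) / (∏ j ∈ Finset.Icc 1 k, (qb j : ℚ)) := by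
  intro k x
  have hq : ∀ l, 1 ≤ l → qb l ≠ 0 := fun l hl => by have := hq2 l hl; omega
  rw [closure_jumpingValues_eq_zmultiples hq hcop hβ0 hβ1 hrec, mem_zmultiples_iff]
  simp only [zsmul_eq_mul, mul_one_div, eq_comm]

/-- The subgroup of ℚ generated by the independent j-values `β̄_0, …, β̄_k`
is `(1/Q̄_k)·ℤ`. -/
theorem stmt_5 (βb : ℕ → ℚ) (pb qb : ℕ → ℕ)
    (hq2 : ∀ l, 1 ≤ l → 2 ≤ qb l) (hppos : ∀ l, 1 ≤ l → 0 < pb l)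
    (hcop : ∀ l, 1 ≤ l → Nat.Coprime (pb l) (qb l))
    (hβ0 : βb 0 = 1)
    (hβ1 : βb 1 = (pb 1 : ℚ) / (qb 1 : ℚ))
    (hrec : ∀ l, 1 ≤ l →
      βb (l + 1) = (qb l : ℚ) * βb l
        + (1 / (∏ j ∈ Finset.Icc 1 l, (qb j : ℚ))) * ((pb (l + 1) : ℚ) / (qb (l + 1) : ℚ))) :
    ∀ k : ℕ, ∀ x : ℚ,
      x ∈ AddSubgroup.closure (βb '' Set.Iic k) ↔
        ∃ n : ℤ, x = (n : ℚ) / (∏ j ∈ Finset.Icc 1 k, (qb j : ℚ)) :=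
  stmt_5_general βb pb qb hq2 hcop hβ0 hβ1 hrec
end

section
/- Let β̄ : ℕ → ℚ satisfy β̄_0 = 1, β̄_1 = p̄_1/q̄_1, β̄_{l+1} = q̄_l β̄_l + (1/Q̄_l)(p̄_{l+1}/q̄_{l+1}) with all q̄_l ≥ 2, gcd(p̄_l, q̄_l) = 1, Q̄_l = q̄_1⋯q̄_l. For every k ≥ 1, β̄_k does not lie in the sub-semigroup of ℚ_{≥0} generated by {β̄_j : j ≥ 0, j ≠ k}. -/
/-! Sums of the generators `β̄_j`, `j < k`, lie in `(1/Q̄_{k-1})ℤ`, which does not contain `β̄_k`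
since `Q̄_{k-1} β̄_k ≡ p̄_k / q̄_k` modulo `ℤ`; the generators `β̄_j`, `j > k`, are all at least
`β̄_{k+1} > β̄_k`. As every generator is positive, an element of the semigroup either lies in
`(1/Q̄_{k-1})ℤ` or is at least `β̄_{k+1}`, so it is never `β̄_k`. -/

open AddSubgroup

theorem AddSubmonoid.mem_or_le_of_mem_closure {M : Type*} [AddCommMonoid M] [PartialOrder M]
    [IsOrderedAddMonoid M] {S : Set M} {H : AddSubmonoid M} {b : M} (hS₀ : ∀ x ∈ S, 0 ≤ x)
    (hS : ∀ x ∈ S, x ∈ H ∨ b ≤ x) {x : M} (hx : x ∈ AddSubmonoid.closure S) : x ∈ H ∨ b ≤ x := by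
  suffices 0 ≤ x ∧ (x ∈ H ∨ b ≤ x) from this.2
  induction hx using AddSubmonoid.closure_induction with
  | mem y hy => exact ⟨hS₀ y hy, hS y hy⟩
  | zero => exact ⟨le_rfl, .inl H.zero_mem⟩
  | add y z _ _ hy hz =>
    refine ⟨add_nonneg hy.1 hz.1, ?_⟩
    obtain ⟨hy₀, hyH | hby⟩ := hy
    · obtain ⟨-, hzH | hbz⟩ := hz
      · exact .inl (H.add_mem hyH hzH)
      · exact .inr (le_add_of_nonneg_of_le hy₀ hbz)
    · exact .inr (le_add_of_le_of_nonneg hby hz.1)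

theorem Nat.Coprime.pos_left_of_two_le {p q : ℕ} (hpq : p.Coprime q) (hq : 2 ≤ q) : 0 < p := by
  refine Nat.pos_of_ne_zero fun hp => ?_
  rw [hp, Nat.coprime_zero_left] at hpq
  omega

theorem Rat.natCast_div_ne_intCast_of_coprime {p q : ℕ} (hpq : p.Coprime q) (hq : 2 ≤ q) (n : ℤ) :
    (p / q : ℚ) ≠ n := by
  intro h
  have hdvd : q ∣ p := by
    rw [← Rat.den_div_natCast_eq_one_iff p q (by omega), h, Rat.den_intCast]
  have := hpq.symm.eq_one_of_dvd hdvd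
  omega

def Qbar (q : ℕ → ℕ) (l : ℕ) : ℚ := ∏ j ∈ Finset.Icc 1 l, (q j : ℚ)

section Qbar

variable {q : ℕ → ℕ}

theorem Qbar_zero : Qbar q 0 = 1 := by simp [Qbar]

theorem Qbar_succ (l : ℕ) : Qbar q (l + 1) = Qbar q l * q (l + 1) :=
  Finset.prod_Icc_succ_top (by omega) _

theorem Qbar_pos (hq : ∀ l, 1 ≤ l → 0 < q l) (l : ℕ) : 0 < Qbar q l :=
  Finset.prod_pos fun j hj => by exact_mod_cast hq j (Finset.mem_Icc.mp hj).1

theorem monotone_zmultiples_Qbar_inv (hq : ∀ l, 1 ≤ l → 0 < q l) :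
    Monotone fun l => zmultiples (Qbar q l)⁻¹ := by
  refine monotone_nat_of_le_succ fun l => zmultiples_le.mpr ⟨q (l + 1), ?_⟩
  have : (q (l + 1) : ℚ) ≠ 0 := by exact_mod_cast (hq (l + 1) (by omega)).ne'
  simp only [Qbar_succ, zsmul_eq_mul, Int.cast_natCast]
  field_simp

end Qbar

structure IsBetaBarSeq (β : ℕ → ℚ) (p q : ℕ → ℕ) : Prop where
  zero : β 0 = 1
  one : β 1 = p 1 / q 1
  succ : ∀ l, 1 ≤ l → β (l + 1) = q l * β l + 1 / Qbar q l * (p (l + 1) / q (l + 1))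

namespace IsBetaBarSeq

variable {β : ℕ → ℚ} {p q : ℕ → ℕ}

theorem pos (hβ : IsBetaBarSeq β p q) (hq : ∀ l, 1 ≤ l → 0 < q l)
    (hp : ∀ l, 1 ≤ l → 0 < p l) : ∀ l, 0 < β l
  | 0 => by rw [hβ.zero]; exact one_pos
  | 1 => by
    rw [hβ.one]
    exact div_pos (by exact_mod_cast hp 1 le_rfl) (by exact_mod_cast hq 1 le_rfl)
  | l + 2 => by
    rw [hβ.succ (l + 1) (by omega)]
    have := hβ.pos hq hp (l + 1)
    have := Qbar_pos hq (l + 1)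
    have := hq (l + 1) (by omega)
    have := hp (l + 2) (by omega)
    have := hq (l + 2) (by omega)
    positivity

theorem lt_succ (hβ : IsBetaBarSeq β p q) (hq : ∀ l, 1 ≤ l → 0 < q l)
    (hp : ∀ l, 1 ≤ l → 0 < p l) {l : ℕ} (hl : 1 ≤ l) : β l < β (l + 1) := by
  have hβl := hβ.pos hq hp l
  have hql : (1 : ℚ) ≤ q l := by exact_mod_cast hq l hl
  have hpq : 0 < 1 / Qbar q l * (p (l + 1) / q (l + 1)) := by
    have := Qbar_pos hq l
    have := hp (l + 1) (by omega)
    have := hq (l + 1) (by omega)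
    positivity
  rw [hβ.succ l hl]
  nlinarith

theorem mem_zmultiples_Qbar_inv (hβ : IsBetaBarSeq β p q) (hq : ∀ l, 1 ≤ l → 0 < q l) :
    ∀ l, β l ∈ zmultiples (Qbar q l)⁻¹
  | 0 => ⟨1, by simp [hβ.zero, Qbar_zero]⟩
  | 1 => ⟨p 1, by simp [hβ.one, Qbar_succ, Qbar_zero, div_eq_mul_inv]⟩
  | l + 2 => by
    obtain ⟨n, hn⟩ := hβ.mem_zmultiples_Qbar_inv hq (l + 1)
    refine ⟨q (l + 1) * q (l + 2) * n + p (l + 2), ?_⟩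
    have := Qbar_pos hq (l + 1)
    have : (q (l + 2) : ℚ) ≠ 0 := by exact_mod_cast (hq (l + 2) (by omega)).ne'
    rw [hβ.succ (l + 1) (by omega), ← hn, Qbar_succ (l + 1)]
    simp only [zsmul_eq_mul]
    push_cast
    field_simp

theorem succ_notMem_zmultiples_Qbar_inv (hβ : IsBetaBarSeq β p q) (hq : ∀ l, 1 ≤ l → 2 ≤ q l)
    (hpq : ∀ l, 1 ≤ l → (p l).Coprime (q l)) (m : ℕ) :
    β (m + 1) ∉ zmultiples (Qbar q m)⁻¹ := by
  have hq₀ : ∀ l, 1 ≤ l → 0 < q l := fun l hl => by have := hq l hl; omega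
  intro h
  obtain ⟨n, hn⟩ := mem_zmultiples_iff.mp h
  rcases m with _ | m
  · rw [Qbar_zero, hβ.one, inv_one, zsmul_one] at hn
    exact Rat.natCast_div_ne_intCast_of_coprime (hpq 1 le_rfl) (hq 1 le_rfl) n hn.symm
  · obtain ⟨n', hn'⟩ := hβ.mem_zmultiples_Qbar_inv hq₀ (m + 1)
    refine Rat.natCast_div_ne_intCast_of_coprime (hpq (m + 2) (by omega)) (hq (m + 2) (by omega))
      (n - q (m + 1) * n') ?_
    have := Qbar_pos hq₀ (m + 1)
    rw [hβ.succ (m + 1) (by omega), ← hn'] at hn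
    simp only [zsmul_eq_mul] at hn
    push_cast
    field_simp at hn ⊢
    linarith

end IsBetaBarSeq

theorem stmt_6_general (βb : ℕ → ℚ) (pb qb : ℕ → ℕ)
    (hq2 : ∀ l, 1 ≤ l → 2 ≤ qb l)
    (hcop : ∀ l, 1 ≤ l → Nat.Coprime (pb l) (qb l))
    (hβ0 : βb 0 = 1)
    (hβ1 : βb 1 = (pb 1 : ℚ) / (qb 1 : ℚ))
    (hrec : ∀ l, 1 ≤ l →
      βb (l + 1) = (qb l : ℚ) * βb l
        + (1 / (∏ j ∈ Finset.Icc 1 l, (qb j : ℚ))) * ((pb (l + 1) : ℚ) / (qb (l + 1) : ℚ))) :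
    ∀ k : ℕ, 1 ≤ k →
      βb k ∉ AddSubmonoid.closure (βb '' {j : ℕ | j ≠ k}) := by
  intro k hk hmem
  obtain ⟨m, rfl⟩ := Nat.exists_eq_add_of_le' hk
  have hβ : IsBetaBarSeq βb pb qb := ⟨hβ0, hβ1, hrec⟩
  have hq : ∀ l, 1 ≤ l → 0 < qb l := fun l hl => by have := hq2 l hl; omega
  have hp : ∀ l, 1 ≤ l → 0 < pb l := fun l hl => (hcop l hl).pos_left_of_two_le (hq2 l hl)
  have hmono : MonotoneOn βb (Set.Ici 1) :=
    monotoneOn_nat_Ici_of_le_succ fun l hl => (hβ.lt_succ hq hp hl).le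
  have hS₀ : ∀ x ∈ βb '' {j | j ≠ m + 1}, 0 ≤ x := by
    rintro _ ⟨j, -, rfl⟩
    exact (hβ.pos hq hp j).le
  have hS : ∀ x ∈ βb '' {j | j ≠ m + 1}, x ∈ zmultiples (Qbar qb m)⁻¹ ∨ βb (m + 2) ≤ x := by
    rintro _ ⟨j, hj, rfl⟩
    rcases Nat.lt_or_gt_of_ne hj with hj | hj
    · exact .inl <|
        monotone_zmultiples_Qbar_inv hq (by omega : j ≤ m) (hβ.mem_zmultiples_Qbar_inv hq j)
    · exact .inr (hmono (by simp) (by simp; omega) (by omega))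
  rcases AddSubmonoid.mem_or_le_of_mem_closure
      (H := (zmultiples (Qbar qb m)⁻¹).toAddSubmonoid) hS₀ hS hmem with h | h
  · exact hβ.succ_notMem_zmultiples_Qbar_inv hq2 hcop m h
  · exact (hβ.lt_succ hq hp (by omega : 1 ≤ m + 1)).not_ge h

/-- For `k ≥ 1`, the independent j-value `β̄_k` is not in the sub-semigroup of
`ℚ_{≥0}` generated by the other independent j-values. -/
theorem stmt_6 (βb : ℕ → ℚ) (pb qb : ℕ → ℕ)
    (hq2 : ∀ l, 1 ≤ l → 2 ≤ qb l) (hppos : ∀ l, 1 ≤ l → 0 < pb l)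
    (hcop : ∀ l, 1 ≤ l → Nat.Coprime (pb l) (qb l))
    (hβ0 : βb 0 = 1)
    (hβ1 : βb 1 = (pb 1 : ℚ) / (qb 1 : ℚ))
    (hrec : ∀ l, 1 ≤ l →
      βb (l + 1) = (qb l : ℚ) * βb l
        + (1 / (∏ j ∈ Finset.Icc 1 l, (qb j : ℚ))) * ((pb (l + 1) : ℚ) / (qb (l + 1) : ℚ))) :
    ∀ k : ℕ, 1 ≤ k →
      βb k ∉ AddSubmonoid.closure (βb '' {j : ℕ | j ≠ k}) :=
  stmt_6_general βb pb qb hq2 hcop hβ0 hβ1 hrec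
end

section
/- Let R be a 2-dimensional regular local ring dominated by a rank-1 valuation ν with ν(u) = 1, and let {T_i} be a sequence of jumping polynomials with j-values β_i and denominators q_i. Suppose f = ∏_{j=0}^k T_j^{m_j} with γ = ν(f) = Σ m_j β_j. Then there exist nonnegative integers d_0,…,d_k with d_j < q_j for 1 ≤ j ≤ k and Σ d_j β_j = γ, a unit μ ∈ R, and f' ∈ 𝒜⁺_γ such that f = μ ∏_{j=0}^k T_j^{d_j} + f'. -/
/-!
Whenever an exponent `m i` with `1 ≤ i ≤ k` is at least `q i`, the relation
`T i ^ q i = T (i + 1) + c i * ∏ j < i, T j ^ n i j` splits the monomial into a unit times a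
monomial of the same value, in which `m i` has dropped by `q i` and only exponents of index
`< i` have grown, plus `T (i + 1)` times a monomial; the latter has value
`γ - q i * β i + β (i + 1) > γ`, so it lies in `𝒜⁺_γ`. Induction on the index `i` above which
all exponents are already reduced, and inside it on `m i`, makes the rewriting terminate.
-/

/-- The ideal `𝒜⁺_γ` generated by monomials in the jumping polynomials `T`
of (weighted) value strictly greater than `γ`. -/
def jumpIdealPlus {R : Type*} [CommRing R] (T : ℕ → R) (β : ℕ → ℚ) (γ : ℚ) : Ideal R :=
  Ideal.span {g | ∃ (k : ℕ) (m : ℕ → ℕ),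
    g = ∏ j ∈ Finset.range (k + 1), T j ^ m j ∧
    γ < ∑ j ∈ Finset.range (k + 1), (m j : ℚ) * β j}

open Finset Function

def jumpMonomial {M : Type*} [CommMonoid M] (T : ℕ → M) (k : ℕ) (a : ℕ → ℕ) : M :=
  ∏ j ∈ range (k + 1), T j ^ a j

def monomialValue (β : ℕ → ℚ) (k : ℕ) (a : ℕ → ℕ) : ℚ :=
  ∑ j ∈ range (k + 1), (a j : ℚ) * β j

section Monomials

variable {M : Type*} [CommMonoid M] (T : ℕ → M) (β : ℕ → ℚ) {k : ℕ}

theorem jumpMonomial_add (a b : ℕ → ℕ) :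
    jumpMonomial T k (a + b) = jumpMonomial T k a * jumpMonomial T k b := by
  simp only [jumpMonomial, Pi.add_apply, pow_add, prod_mul_distrib]

theorem monomialValue_add (a b : ℕ → ℕ) :
    monomialValue β k (a + b) = monomialValue β k a + monomialValue β k b := by
  simp only [monomialValue, Pi.add_apply, Nat.cast_add, add_mul, sum_add_distrib]

theorem jumpMonomial_update_add {i : ℕ} (hi : i ≤ k) (a : ℕ → ℕ) (e : ℕ) :
    jumpMonomial T k (update a i (a i + e)) = T i ^ e * jumpMonomial T k a := by
  have hmem : i ∈ range (k + 1) := mem_range.2 (by omega)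
  rw [jumpMonomial, jumpMonomial, ← mul_prod_erase _ _ hmem, ← mul_prod_erase _ _ hmem,
    update_self]
  have hrest : ∏ j ∈ (range (k + 1)).erase i, T j ^ update a i (a i + e) j
      = ∏ j ∈ (range (k + 1)).erase i, T j ^ a j :=
    prod_congr rfl fun j hj => by rw [update_of_ne (ne_of_mem_erase hj)]
  rw [hrest, pow_add, mul_comm (T i ^ a i), mul_assoc]

theorem monomialValue_update_add {i : ℕ} (hi : i ≤ k) (a : ℕ → ℕ) (e : ℕ) :
    monomialValue β k (update a i (a i + e)) = e * β i + monomialValue β k a := by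
  have hmem : i ∈ range (k + 1) := mem_range.2 (by omega)
  rw [monomialValue, monomialValue, ← add_sum_erase _ _ hmem, ← add_sum_erase _ _ hmem,
    update_self]
  have hrest : ∑ j ∈ (range (k + 1)).erase i, (update a i (a i + e) j : ℚ) * β j
      = ∑ j ∈ (range (k + 1)).erase i, (a j : ℚ) * β j :=
    sum_congr rfl fun j hj => by rw [update_of_ne (ne_of_mem_erase hj)]
  rw [hrest]
  push_cast
  ring

theorem jumpMonomial_succ_update_zero (a : ℕ → ℕ) :
    jumpMonomial T (k + 1) (update a (k + 1) 0) = jumpMonomial T k a := by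
  rw [jumpMonomial, prod_range_succ, update_self, pow_zero, mul_one]
  exact prod_congr rfl fun j hj => by rw [update_of_ne (mem_range.1 hj).ne]

theorem monomialValue_succ_update_zero (a : ℕ → ℕ) :
    monomialValue β (k + 1) (update a (k + 1) 0) = monomialValue β k a := by
  rw [monomialValue, sum_range_succ, update_self, Nat.cast_zero, zero_mul, add_zero]
  exact sum_congr rfl fun j hj => by rw [update_of_ne (mem_range.1 hj).ne]

theorem jumpMonomial_ite_lt {i : ℕ} (hi : i ≤ k + 1) (a : ℕ → ℕ) :
    jumpMonomial T k (fun j => if j < i then a j else 0) = ∏ j ∈ range i, T j ^ a j := by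
  rw [jumpMonomial, ← prod_range_mul_prod_Ico _ hi,
    prod_eq_one (s := Ico i (k + 1)) fun j hj => by rw [if_neg (not_lt.2 (mem_Ico.1 hj).1), pow_zero],
    mul_one]
  exact prod_congr rfl fun j hj => by rw [if_pos (mem_range.1 hj)]

theorem monomialValue_ite_lt {i : ℕ} (hi : i ≤ k + 1) (a : ℕ → ℕ) :
    monomialValue β k (fun j => if j < i then a j else 0) = ∑ j ∈ range i, (a j : ℚ) * β j := by
  rw [monomialValue, ← sum_range_add_sum_Ico _ hi,
    sum_eq_zero (s := Ico i (k + 1)) fun j hj => by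
      rw [if_neg (not_lt.2 (mem_Ico.1 hj).1), Nat.cast_zero, zero_mul],
    add_zero]
  exact sum_congr rfl fun j hj => by rw [if_pos (mem_range.1 hj)]

end Monomials

section Reduction

variable {R : Type*} [CommRing R] (T : ℕ → R) (β : ℕ → ℚ) (q : ℕ → ℕ) (k : ℕ)

theorem mul_jumpMonomial_mem_jumpIdealPlus {l : ℕ} (hl : l ≤ k + 1) (a : ℕ → ℕ) {γ : ℚ}
    (h : γ < β l + monomialValue β k a) :
    T l * jumpMonomial T k a ∈ jumpIdealPlus T β γ := by
  -- `l` may be `k + 1`: use a generator over `range (k + 2)` after clearing the exponent of `k + 1`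
  set a' := update a (k + 1) 0
  refine Ideal.subset_span ⟨k + 1, update a' l (a' l + 1), ?_, ?_⟩
  · rw [← jumpMonomial, ← jumpMonomial_succ_update_zero T a, jumpMonomial_update_add T hl,
      pow_one]
  · rw [← monomialValue, monomialValue_update_add β hl, monomialValue_succ_update_zero]
    push_cast
    linarith

def HasReducedForm (m : ℕ → ℕ) : Prop :=
  ∃ d : ℕ → ℕ, (∀ j, 1 ≤ j → j ≤ k → d j < q j) ∧
    monomialValue β k d = monomialValue β k m ∧
    ∃ (μ : Rˣ) (f' : R), f' ∈ jumpIdealPlus T β (monomialValue β k m) ∧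
      jumpMonomial T k m = μ * jumpMonomial T k d + f'

variable {T β q k}

theorem hasReducedForm_of_substitution {i : ℕ} (hik : i ≤ k) (n : ℕ → ℕ) (c : Rˣ)
    (hrec : T (i + 1) = T i ^ q i - c * ∏ j ∈ range i, T j ^ n j)
    (hval : (q i : ℚ) * β i = ∑ j ∈ range i, (n j : ℚ) * β j)
    (hgrow : (q i : ℚ) * β i < β (i + 1)) {m : ℕ → ℕ} (hm : q i ≤ m i)
    (hred : HasReducedForm T β q k
      (update m i (m i - q i) + fun j => if j < i then n j else 0)) :
    HasReducedForm T β q k m := by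
  set r := update m i (m i - q i)
  set N : ℕ → ℕ := fun j => if j < i then n j else 0
  have hupdate : update r i (r i + q i) = m := by
    simp [r, Nat.sub_add_cancel hm]
  have hmono :
      jumpMonomial T k m = c * jumpMonomial T k (r + N) + T (i + 1) * jumpMonomial T k r := by
    rw [← hupdate, jumpMonomial_update_add T hik, jumpMonomial_add,
      jumpMonomial_ite_lt T (by omega), hrec]
    ring
  have hvalm : monomialValue β k m = q i * β i + monomialValue β k r := by
    rw [← hupdate, monomialValue_update_add β hik]
  have hvalN : monomialValue β k N = q i * β i := by
    rw [monomialValue_ite_lt β (by omega), hval]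
  have hvalrN : monomialValue β k (r + N) = monomialValue β k m := by
    rw [monomialValue_add, hvalN, hvalm, add_comm]
  have htail : T (i + 1) * jumpMonomial T k r ∈ jumpIdealPlus T β (monomialValue β k m) :=
    mul_jumpMonomial_mem_jumpIdealPlus T β k (by omega) r (by linarith)
  obtain ⟨d, hdq, hdval, μ, f', hf', hrN⟩ := hred
  rw [hvalrN] at hdval hf'
  refine ⟨d, hdq, hdval, c * μ, c * f' + T (i + 1) * jumpMonomial T k r,
    Ideal.add_mem _ (Ideal.mul_mem_left _ _ hf') htail, ?_⟩
  rw [hmono, hrN, Units.val_mul]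
  ring

theorem hasReducedForm_of_lt_above {n : ℕ → ℕ → ℕ} {c : ℕ → Rˣ} (hqpos : ∀ i, 0 < q i)
    (hrec : ∀ i, 1 ≤ i → T (i + 1) = T i ^ q i - (c i : R) * ∏ j ∈ range i, T j ^ n i j)
    (hval : ∀ i, 1 ≤ i → (q i : ℚ) * β i = ∑ j ∈ range i, (n i j : ℚ) * β j)
    (hgrow : ∀ i, 1 ≤ i → (q i : ℚ) * β i < β (i + 1)) (i : ℕ) :
    ∀ m : ℕ → ℕ, (∀ j, i < j → j ≤ k → m j < q j) → HasReducedForm T β q k m := by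
  induction i with
  | zero =>
    intro m hm
    exact ⟨m, hm, rfl, 1, 0, Ideal.zero_mem _, by rw [Units.val_one, one_mul, add_zero]⟩
  | succ i ih =>
    intro m hm
    induction hmi : m (i + 1) using Nat.strong_induction_on generalizing m with
    | _ e ihe =>
    by_cases hreducible : i + 1 ≤ k ∧ q (i + 1) ≤ m (i + 1)
    · obtain ⟨hik, hqm⟩ := hreducible
      refine hasReducedForm_of_substitution hik _ _ (hrec _ (by omega)) (hval _ (by omega))
        (hgrow _ (by omega)) hqm (ihe (m (i + 1) - q (i + 1)) ?_ _ ?_ ?_)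
      · have := hqpos (i + 1)
        omega
      · intro j hj hjk
        simpa [update_of_ne (show j ≠ i + 1 by omega), show ¬ j ≤ i by omega] using
          hm j hj hjk
      · simp
    · refine ih m fun j hj hjk => ?_
      rcases (show j = i + 1 ∨ i + 1 < j by omega) with rfl | hj'
      · omega
      · exact hm j hj' hjk

end Reduction

theorem stmt_10_general {R : Type*} [CommRing R]
    (T : ℕ → R) (β : ℕ → ℚ) (q : ℕ → ℕ) (n : ℕ → ℕ → ℕ) (c : ℕ → Rˣ)
    (hqpos : ∀ i, 0 < q i)
    (hrec : ∀ i, 1 ≤ i →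
      T (i + 1) = T i ^ q i - (c i : R) * ∏ j ∈ Finset.range i, T j ^ n i j)
    (hval : ∀ i, 1 ≤ i →
      (q i : ℚ) * β i = ∑ j ∈ Finset.range i, (n i j : ℚ) * β j)
    (hgrow : ∀ i, 1 ≤ i → (q i : ℚ) * β i < β (i + 1))
    (k : ℕ) (m : ℕ → ℕ) (γ : ℚ)
    (hγ : γ = ∑ j ∈ Finset.range (k + 1), (m j : ℚ) * β j) :
    ∃ d : ℕ → ℕ,
      (∀ j, 1 ≤ j → j ≤ k → d j < q j) ∧
      (∑ j ∈ Finset.range (k + 1), (d j : ℚ) * β j = γ) ∧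
      ∃ (μ : Rˣ) (f' : R), f' ∈ jumpIdealPlus T β γ ∧
        ∏ j ∈ Finset.range (k + 1), T j ^ m j =
          (μ : R) * ∏ j ∈ Finset.range (k + 1), T j ^ d j + f' := by
  subst hγ
  exact hasReducedForm_of_lt_above hqpos hrec hval hgrow k m fun j hj hjk => by omega

/-- Lemma "reduced": every monomial in the jumping polynomials can be rewritten, modulo
`𝒜⁺_γ`, as a unit times a monomial with exponents `d_j < q_j`. -/
theorem stmt_10 {R : Type*} [CommRing R] [IsDomain R] [IsNoetherianRing R] [IsLocalRing R]
    (u v : R) (hreg : IsLocalRing.maximalIdeal R = Ideal.span {u, v})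
    (hdim : ringKrullDim R = 2)
    (ν : R → WithTop ℚ) (T : ℕ → R) (β : ℕ → ℚ) (p q : ℕ → ℕ) (n : ℕ → ℕ → ℕ) (c : ℕ → Rˣ)
    (hmul : ∀ f g : R, ν (f * g) = ν f + ν g)
    (hT0 : T 0 = u) (hT1 : T 1 = v)
    (hνu : ν u = (1 : ℚ)) (hβ0 : β 0 = 1)
    (hνT : ∀ i, ν (T i) = (β i : ℚ)) (hβpos : ∀ i, 0 < β i)
    (hqpos : ∀ i, 0 < q i) (hppos : ∀ i, 0 < p i)
    (hcop : ∀ i, 1 ≤ i → Nat.Coprime (p i) (q i))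
    (hrec : ∀ i, 1 ≤ i →
      T (i + 1) = T i ^ q i - (c i : R) * ∏ j ∈ Finset.range i, T j ^ n i j)
    (hn : ∀ i, 1 ≤ i → ∀ j, 1 ≤ j → j < i → n i j < q j)
    (hval : ∀ i, 1 ≤ i →
      (q i : ℚ) * β i = ∑ j ∈ Finset.range i, (n i j : ℚ) * β j)
    (hgrow : ∀ i, 1 ≤ i → (q i : ℚ) * β i < β (i + 1))
    (k : ℕ) (m : ℕ → ℕ) (γ : ℚ)
    (hγ : γ = ∑ j ∈ Finset.range (k + 1), (m j : ℚ) * β j) :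
    ∃ d : ℕ → ℕ,
      (∀ j, 1 ≤ j → j ≤ k → d j < q j) ∧
      (∑ j ∈ Finset.range (k + 1), (d j : ℚ) * β j = γ) ∧
      ∃ (μ : Rˣ) (f' : R), f' ∈ jumpIdealPlus T β γ ∧
        ∏ j ∈ Finset.range (k + 1), T j ^ m j =
          (μ : R) * ∏ j ∈ Finset.range (k + 1), T j ^ d j + f' :=
  stmt_10_general T β q n c hqpos hrec hval hgrow k m γ hγ
end
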